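/- Let D : ℝ → ℝ ∪ {−∞} be upper semicontinuous and bounded above by d ∈ ℝ. Consider the family g_{γ,δ}(x) = −γ·(x − δ)² for γ > 0, δ ∈ ℝ, and define L_{γ,δ}(h) = (D + g_{γ,δ})⋆⋆(h) − g_{γ,δ}(h), where ⋆⋆ denotes the concave envelope. Then for every dense countable subset Υ of (0,∞) × ℝ and every h ∈ ℝ, the infimum over the family recovers D exactly: inf_{(γ,δ) ∈ Υ} L_{γ,δ}(h) = D(h). -/

import Mathlib

open Filter Set

/-- Multifractal-style Legendre transform (concave convention):
`legStar d f q = ⨅ h, (d + q·h) − f h`. -/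
noncomputable def legStar (d : ℝ) (f : ℝ → EReal) (q : ℝ) : EReal :=
  ⨅ h : ℝ, ((d + q * h : ℝ) : EReal) - f h

/-- Double Legendre transform. -/
noncomputable def legStar2 (d : ℝ) (f : ℝ → EReal) (x : ℝ) : EReal :=
  ⨅ q : ℝ, ((d + q * x : ℝ) : EReal) - legStar d f q

/-- Concave envelope: pointwise infimum of all affine majorants. -/
noncomputable def concEnv (f : ℝ → EReal) (x : ℝ) : EReal :=
  ⨅ p : {p : ℝ × ℝ // ∀ t, f t ≤ ((p.1 * t + p.2 : ℝ) : EReal)},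
    ((p.1.1 * x + p.1.2 : ℝ) : EReal)

/-!
Every `L_{γ,δ}` dominates `D`, since `D + g ≤ (D + g)⋆⋆`. Conversely, fix a real `c > D h` and
`c₀` strictly between. By upper semicontinuity `D < c₀` on an interval of radius `r` around `h`;
since `D ≤ d`, a parabola `-γ (x - δ)²` with `δ` near `h` and `γ r² > 4 (d - c₀)` pulls `D + g`
below the constant `c₀` everywhere, so `L_{γ,δ}(h) ≤ c₀ + γ (h - δ)²`. These conditions, together
with `γ (h - δ)² < c - c₀`, hold on a neighbourhood of some `(γ₀, h)` with `γ₀ > 0`, which meets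
the dense family `Υ`.
-/

open Topology

/-- The generalized spectrum `L_g = (D + g)⋆⋆ - g` attached to a template `g`. -/
noncomputable def genSpectrum (D : ℝ → EReal) (g : ℝ → ℝ) (h : ℝ) : EReal :=
  concEnv (fun x => D x + (g x : EReal)) h - (g h : EReal)

theorem le_concEnv (f : ℝ → EReal) (x : ℝ) : f x ≤ concEnv f x :=
  le_iInf fun p => p.2 x

theorem concEnv_le_of_forall_le {f : ℝ → EReal} {c : ℝ} (hf : ∀ t, f t ≤ c) (x : ℝ) :
    concEnv f x ≤ c :=
  iInf_le_of_le ⟨(0, c), by simpa using hf⟩ (by simp)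

theorem le_genSpectrum (D : ℝ → EReal) (g : ℝ → ℝ) (h : ℝ) : D h ≤ genSpectrum D g h := by
  calc D h = D h + (g h : EReal) - (g h : EReal) := (EReal.add_sub_cancel_right ..).symm
    _ ≤ genSpectrum D g h := EReal.sub_le_sub (le_concEnv (fun x => D x + (g x : EReal)) h) le_rfl

theorem genSpectrum_le {D : ℝ → EReal} {g : ℝ → ℝ} {c : ℝ} (hc : ∀ t, D t + (g t : EReal) ≤ c)
    (h : ℝ) : genSpectrum D g h ≤ ((c - g h : ℝ) : EReal) :=
  EReal.sub_le_sub (concEnv_le_of_forall_le hc h) le_rfl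

theorem add_neg_parabola_le {D : ℝ → EReal} {d c r γ δ h : ℝ} (hbd : ∀ t, D t ≤ d)
    (hloc : ∀ t, dist t h < r → D t ≤ c) (hγ : 0 ≤ γ) (hδ : dist δ h ≤ r / 2)
    (hγr : 4 * (d - c) ≤ γ * r ^ 2) (t : ℝ) : D t + ((-γ * (t - δ) ^ 2 : ℝ) : EReal) ≤ c := by
  rcases lt_or_ge (dist t h) r with hnear | hfar
  · have hg : -γ * (t - δ) ^ 2 ≤ 0 := by nlinarith [sq_nonneg (t - δ)]
    simpa using add_le_add (hloc t hnear) (EReal.coe_le_coe_iff.2 hg)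
  · have hsep : r / 2 ≤ |t - δ| := by
      rw [Real.dist_eq] at hfar hδ
      linarith [abs_sub_le t δ h, abs_sub_comm δ h]
    have hg : -γ * (t - δ) ^ 2 ≤ c - d := by
      have : (r / 2) ^ 2 ≤ (t - δ) ^ 2 := by
        rw [← sq_abs (t - δ)]
        exact pow_le_pow_left₀ (by linarith [dist_nonneg (x := δ) (y := h)]) hsep 2
      nlinarith
    calc D t + ((-γ * (t - δ) ^ 2 : ℝ) : EReal) ≤ (d : EReal) + ((c - d : ℝ) : EReal) :=
          add_le_add (hbd t) (EReal.coe_le_coe_iff.2 hg)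
      _ = c := by norm_cast; ring_nf

theorem eventually_genSpectrum_parabola_le {D : ℝ → EReal} {d c₀ c r γ₀ h : ℝ}
    (hbd : ∀ t, D t ≤ d) (hloc : ∀ t, dist t h < r → D t ≤ c₀) (hc : c₀ < c) (hr : 0 < r)
    (hγ₀ : 0 < γ₀) (hγ₀r : 4 * (d - c₀) < γ₀ * r ^ 2) :
    ∀ᶠ p : ℝ × ℝ in 𝓝 (γ₀, h), genSpectrum D (fun x => -p.1 * (x - p.2) ^ 2) h ≤ c := by
  have hpos : ∀ᶠ p : ℝ × ℝ in 𝓝 (γ₀, h), 0 < p.1 :=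
    continuousAt_const.eventually_lt (by fun_prop) hγ₀
  have hsteep : ∀ᶠ p : ℝ × ℝ in 𝓝 (γ₀, h), 4 * (d - c₀) < p.1 * r ^ 2 :=
    continuousAt_const.eventually_lt (by fun_prop) hγ₀r
  have hcentre : ∀ᶠ p : ℝ × ℝ in 𝓝 (γ₀, h), dist p.2 h < r / 2 :=
    ContinuousAt.eventually_lt (by fun_prop) continuousAt_const (by simpa using hr)
  have hshift : ∀ᶠ p : ℝ × ℝ in 𝓝 (γ₀, h), p.1 * (h - p.2) ^ 2 < c - c₀ :=
    ContinuousAt.eventually_lt (by fun_prop) continuousAt_const (by simpa using hc)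
  filter_upwards [hpos, hsteep, hcentre, hshift] with p hp hpr hpδ hph
  calc genSpectrum D (fun x => -p.1 * (x - p.2) ^ 2) h
        ≤ ((c₀ - -p.1 * (h - p.2) ^ 2 : ℝ) : EReal) :=
          genSpectrum_le (add_neg_parabola_le hbd hloc hp.le hpδ.le hpr.le) h
    _ ≤ c := EReal.coe_le_coe_iff.2 (by linarith)

theorem exists_mem_genSpectrum_parabola_le {D : ℝ → EReal} {d c h : ℝ} {Υ : Set (ℝ × ℝ)}
    (husc : UpperSemicontinuous D) (hbd : ∀ t, D t ≤ d) (hdense : Ioi 0 ×ˢ univ ⊆ closure Υ)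
    (hc : D h < c) : ∃ p ∈ Υ, genSpectrum D (fun x => -p.1 * (x - p.2) ^ 2) h ≤ c := by
  obtain ⟨c₀, hDc₀, hc₀c⟩ := EReal.exists_between_coe_real hc
  obtain ⟨r, hr, hloc⟩ := Metric.eventually_nhds_iff.1 (husc h _ hDc₀)
  obtain ⟨γ₀, hγ₀r, hγ₀⟩ := (((tendsto_id.atTop_mul_const (pow_pos hr 2)).eventually_gt_atTop
    (4 * (d - c₀))).and (eventually_gt_atTop 0)).exists
  have hfreq : ∃ᶠ p in 𝓝 (γ₀, h), p ∈ Υ :=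
    mem_closure_iff_frequently.1 (hdense ⟨hγ₀, trivial⟩)
  exact (hfreq.and_eventually (eventually_genSpectrum_parabola_le hbd (fun t ht => (hloc ht).le)
    (EReal.coe_lt_coe_iff.1 hc₀c) hr hγ₀ hγ₀r)).exists

theorem inf_generalized_spectra_eq_general (D : ℝ → EReal) (d : ℝ)
    (husc : UpperSemicontinuous D) (hbd : ∀ h, D h ≤ (d : EReal))
    (Υ : Set (ℝ × ℝ))
    (hdense : Set.Ioi (0:ℝ) ×ˢ (Set.univ : Set ℝ) ⊆ closure Υ) :
    ∀ h : ℝ,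
      (⨅ p : Υ,
        (concEnv (fun x => D x + ((-(p.1.1) * (x - p.1.2)^2 : ℝ) : EReal)) h
          - ((-(p.1.1) * (h - p.1.2)^2 : ℝ) : EReal))) = D h := by
  intro h
  change ⨅ p : Υ, genSpectrum D (fun x => -p.1.1 * (x - p.1.2) ^ 2) h = D h
  refine le_antisymm (le_of_forall_gt_imp_ge_of_dense fun c hc => ?_)
    (le_iInf fun p => le_genSpectrum D _ h)
  obtain ⟨c', hDc', hc'c⟩ := EReal.exists_between_coe_real hc
  obtain ⟨p, hpΥ, hp⟩ := exists_mem_genSpectrum_parabola_le husc hbd hdense hDc'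
  exact iInf_le_of_le ⟨p, hpΥ⟩ (hp.trans hc'c.le)

/-- Theorem 1 for the parabolic template — the infimum of the
generalized Legendre spectra over any dense countable family of translates and
dilates recovers D exactly. -/
theorem inf_generalized_spectra_eq (D : ℝ → EReal) (d : ℝ)
    (husc : UpperSemicontinuous D) (hbd : ∀ h, D h ≤ (d : EReal))
    (Υ : Set (ℝ × ℝ)) (hsub : Υ ⊆ Set.Ioi (0:ℝ) ×ˢ (Set.univ : Set ℝ))
    (hcount : Υ.Countable)
    (hdense : Set.Ioi (0:ℝ) ×ˢ (Set.univ : Set ℝ) ⊆ closure Υ) :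
    ∀ h : ℝ,
      (⨅ p : Υ,
        (concEnv (fun x => D x + ((-(p.1.1) * (x - p.1.2)^2 : ℝ) : EReal)) h
          - ((-(p.1.1) * (h - p.1.2)^2 : ℝ) : EReal))) = D h :=
  inf_generalized_spectra_eq_general D d husc hbd Υ hdense
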